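/- arXiv:2402.13170 — 2 statements merged into one kernel-verified Lean document; each statement's English description precedes it below -/
import Mathlib

section
/- Define β : [0,1] → ℝ by β(α) = 0.13 if 0.45 ≤ α ≤ 0.55 and β(α) = 0 otherwise. For α ∈ [0,1] set γ(α) = (α − 3β(α)/2)/(1 − 3β(α)), λ(α) = h(3β(α)) − α·h(3β(α)/(2α)) − (1−α)·h(3β(α)/(2(1−α))) (where a term with coefficient α = 0 or 1−α = 0 is taken to be 0), and S(α) = (1/4)·( 3h(γ(α)) − 9β(α)·h(γ(α)) + 6β(α)·h(1/4) + 4β(α) − 2 + 4λ(α) ). Then S(α) ≤ S(1/2) ≤ 0.246 for every α ∈ [0,1]. -/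
open scoped Classical

/-- Binary entropy function (base-2 logarithm). Note `Real.logb 2 0 = 0`,
so `binH 0 = binH 1 = 0` automatically. -/
noncomputable def binH (x : ℝ) : ℝ := -x * Real.logb 2 x - (1 - x) * Real.logb 2 (1 - x)

/-- The parameter β(α) from the algorithm. -/
noncomputable def betaFn (α : ℝ) : ℝ := if 0.45 ≤ α ∧ α ≤ 0.55 then 0.13 else 0

/-- γ(α) = (α − 3β(α)/2)/(1 − 3β(α)). -/
noncomputable def gammaFn (α : ℝ) : ℝ := (α - 3 * betaFn α / 2) / (1 - 3 * betaFn α)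

/-- λ(α) = h(3β) − α·h(3β/(2α)) − (1−α)·h(3β/(2(1−α))).
(For α = 0 or α = 1 the degenerate term vanishes since its coefficient is 0.) -/
noncomputable def lamFn (α : ℝ) : ℝ :=
  binH (3 * betaFn α) - α * binH (3 * betaFn α / (2 * α))
    - (1 - α) * binH (3 * betaFn α / (2 * (1 - α)))

/-- The space-complexity exponent S(α). -/
noncomputable def SFn (α : ℝ) : ℝ :=
  (1 / 4) * (3 * binH (gammaFn α) - 9 * betaFn α * binH (gammaFn α)
    + 6 * betaFn α * binH (1 / 4) + 4 * betaFn α - 2 + 4 * lamFn α)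

/-!
Two curvature bounds on `h` do the work: concavity of `h(x) + 2x²/ln 2` on `[0, 1]` gives
`h(x) ≤ 1 - 2 (x - 1/2)²/ln 2`, and convexity of `h(x) + 2.3x²/ln 2` on `[0.35, 0.44]` bounds
the Jensen gap `h(ta + (1-t)b) - t h(a) - (1-t) h(b)` there by `2.3 t(1-t)(a-b)²/ln 2`.

Outside the window `0.45 ≤ α ≤ 0.55` we have `β = λ = 0` and `γ = α`, so
`4 S(α) = 3 h(α) - 2 ≤ 3 h(0.45) - 2`, which the first bound and `19/12 < log₂ 3 < 27/17` place
under `4 S(1/2)`. Inside the window `4 S(α) - 4 S(1/2) = 1.83 (h(γ) - 1) + 4 λ`, where `λ` is the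
Jensen gap of `h` at `0.39/(2α), 0.39/(2(1-α)) ∈ [0.35, 0.44]` with weights `α, 1-α`. Both
bounds are multiples of `(1 - 2α)²`, and the negative one coming from `h(γ)` dominates.
-/

open Real Set

lemma hasDerivAt_binEntropy_add_sq (K : ℝ) {y : ℝ} (h0 : y ≠ 0) (h1 : y ≠ 1) :
    HasDerivAt (fun y => binEntropy y + K / 2 * y ^ 2) (log (1 - y) - log y + K * y) y :=
  ((hasDerivAt_binEntropy h0 h1).fun_add ((hasDerivAt_pow 2 y).const_mul (K / 2))).congr_deriv
    (by push_cast; ring)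

lemma hasDerivAt_log_one_sub_sub_log_add_mul (K : ℝ) {y : ℝ} (h0 : y ≠ 0) (h1 : y ≠ 1) :
    HasDerivAt (fun y => log (1 - y) - log y + K * y) (K - 1 / (y * (1 - y))) y := by
  have h1' : 1 - y ≠ 0 := sub_ne_zero.2 h1.symm
  refine ((((hasDerivAt_id' y).const_sub 1).log h1').fun_sub (hasDerivAt_log h0)).fun_add
    ((hasDerivAt_id' y).const_mul K) |>.congr_deriv ?_
  field_simp
  ring

lemma convexOn_binEntropy_add_sq {s : Set ℝ} (hs : Convex ℝ s) (hs01 : s ⊆ Ioo 0 1) {K : ℝ}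
    (hK : ∀ y ∈ s, 1 ≤ K * (y * (1 - y))) :
    ConvexOn ℝ s (fun y => binEntropy y + K / 2 * y ^ 2) := by
  have hne : ∀ y ∈ interior s, y ≠ 0 ∧ y ≠ 1 := fun y hy =>
    ⟨(hs01 (interior_subset hy)).1.ne', (hs01 (interior_subset hy)).2.ne⟩
  refine convexOn_of_hasDerivWithinAt2_nonneg hs (by fun_prop)
    (fun y hy => (hasDerivAt_binEntropy_add_sq K (hne y hy).1 (hne y hy).2).hasDerivWithinAt)
    (fun y hy => (hasDerivAt_log_one_sub_sub_log_add_mul K (hne y hy).1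
      (hne y hy).2).hasDerivWithinAt) fun y hy => ?_
  obtain ⟨hy0, hy1⟩ := hs01 (interior_subset hy)
  rw [sub_nonneg, div_le_iff₀ (by nlinarith)]
  exact hK y (interior_subset hy)

lemma concaveOn_binEntropy_add_sq {K : ℝ} (hK : K ≤ 4) :
    ConcaveOn ℝ (Icc 0 1) (fun y => binEntropy y + K / 2 * y ^ 2) := by
  refine concaveOn_of_hasDerivWithinAt2_nonpos (convex_Icc 0 1) (by fun_prop)
    (f' := fun y => log (1 - y) - log y + K * y) (f'' := fun y => K - 1 / (y * (1 - y)))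
    (fun y hy => ?_) (fun y hy => ?_) fun y hy => ?_ <;>
    rw [interior_Icc] at hy <;> obtain ⟨hy0, hy1⟩ := hy
  · exact (hasDerivAt_binEntropy_add_sq K hy0.ne' hy1.ne).hasDerivWithinAt
  · exact (hasDerivAt_log_one_sub_sub_log_add_mul K hy0.ne' hy1.ne).hasDerivWithinAt
  · rw [sub_nonpos, le_div_iff₀ (by nlinarith)]
    nlinarith [mul_le_mul_of_nonneg_right hK (by nlinarith : 0 ≤ y * (1 - y)),
      sq_nonneg (2 * y - 1)]

lemma jensen_gap_le_of_convexOn_add_sq {s : Set ℝ} {f : ℝ → ℝ} {K : ℝ}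
    (hf : ConvexOn ℝ s fun y => f y + K / 2 * y ^ 2) {a b t : ℝ} (ha : a ∈ s) (hb : b ∈ s)
    (ht0 : 0 ≤ t) (ht1 : t ≤ 1) :
    f (t * a + (1 - t) * b) - t * f a - (1 - t) * f b ≤ K / 2 * (t * (1 - t) * (a - b) ^ 2) := by
  have := hf.2 ha hb ht0 (sub_nonneg.2 ht1) (add_sub_cancel t 1)
  simp only [smul_eq_mul] at this
  linear_combination this

lemma binEntropy_le_log_two_sub_sq {x : ℝ} (hx : x ∈ Icc 0 1) :
    binEntropy x ≤ log 2 - 2 * (x - 1 / 2) ^ 2 := by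
  have hx' : 1 - x ∈ Icc (0 : ℝ) 1 := ⟨sub_nonneg.2 hx.2, sub_le_self 1 hx.1⟩
  -- average the concavity inequality at `x` and `1 - x`
  have := (concaveOn_binEntropy_add_sq le_rfl).2 hx hx' (by norm_num : (0:ℝ) ≤ 1 / 2)
    (by norm_num : (0:ℝ) ≤ 1 / 2) (by norm_num)
  simp only [smul_eq_mul, binEntropy_one_sub] at this
  rw [show 1 / 2 * x + 1 / 2 * (1 - x) = (2⁻¹ : ℝ) by ring, binEntropy_two_inv] at this
  linear_combination this

lemma binH_eq_binEntropy_div (x : ℝ) : binH x = binEntropy x / log 2 := by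
  rw [binH, binEntropy, logb, logb, log_inv, log_inv]
  ring

lemma binH_half : binH (1 / 2) = 1 := by
  rw [binH_eq_binEntropy_div, one_div, binEntropy_two_inv, div_self (log_pos one_lt_two).ne']

lemma binH_le_one_sub_sq {x : ℝ} (hx : x ∈ Icc 0 1) :
    binH x ≤ 1 - 2 * (x - 1 / 2) ^ 2 / log 2 := by
  have hlog := log_pos one_lt_two
  rw [binH_eq_binEntropy_div, div_le_iff₀ hlog, sub_mul, div_mul_cancel₀ _ hlog.ne', one_mul]
  exact binEntropy_le_log_two_sub_sq hx

lemma binH_le_of_notMem_Ioo {p x : ℝ} (hp : p ∈ Icc 0 (1 / 2)) (hx : x ∈ Icc 0 1)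
    (hxp : x ∉ Ioo p (1 - p)) : binH x ≤ binH p := by
  have hmono : MonotoneOn binEntropy (Icc 0 2⁻¹) := binEntropy_strictMonoOn.monotoneOn
  rw [binH_eq_binEntropy_div, binH_eq_binEntropy_div]
  gcongr
  obtain ⟨hp0, hp⟩ := hp
  rcases le_or_gt x p with hxp' | hpx
  · exact hmono ⟨hx.1, by linarith⟩ ⟨by linarith, by linarith⟩ hxp'
  · have : 1 - p ≤ x := not_lt.1 fun h => hxp ⟨hpx, h⟩
    rw [← binEntropy_one_sub x]
    exact hmono ⟨by linarith [hx.2], by linarith⟩ ⟨by linarith, by linarith⟩ (by linarith)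

lemma binH_quarter : binH (1 / 4) = 2 - 3 / 4 * logb 2 3 := by
  have h4 : logb 2 4 = 2 := by
    rw [show (4 : ℝ) = 2 ^ 2 by norm_num, logb_pow, logb_self_eq_one one_lt_two]; norm_num
  rw [binH, show (1 : ℝ) - 1 / 4 = 3 / 4 by norm_num, one_div, logb_inv,
    logb_div (by norm_num) (by norm_num), h4]
  ring

lemma logb_two_three_mem : logb 2 3 ∈ Ioo (19 / 12) (27 / 17) := by
  have hlog := log_pos one_lt_two
  have h19 : log (2 ^ 19) < log (3 ^ 12) := log_lt_log (by norm_num) (by norm_num)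
  have h17 : log (3 ^ 17) < log (2 ^ 27) := log_lt_log (by norm_num) (by norm_num)
  simp only [log_pow] at h19 h17
  push_cast at h19 h17
  constructor
  · rw [logb, lt_div_iff₀ hlog]
    linarith
  · rw [logb, div_lt_iff₀ hlog]
    linarith

lemma betaFn_of_mem {α : ℝ} (h : α ∈ Icc 0.45 0.55) : betaFn α = 0.13 := if_pos h

lemma betaFn_of_notMem {α : ℝ} (h : α ∉ Icc 0.45 0.55) : betaFn α = 0 := if_neg h

lemma gammaFn_of_mem {α : ℝ} (h : α ∈ Icc 0.45 0.55) : gammaFn α = (α - 0.195) / 0.61 := by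
  rw [gammaFn, betaFn_of_mem h]
  norm_num

lemma SFn_of_mem {α : ℝ} (h : α ∈ Icc 0.45 0.55) :
    SFn α = (1.83 * binH (gammaFn α) + 0.78 * binH (1 / 4) - 1.48 + 4 * lamFn α) / 4 := by
  rw [SFn, betaFn_of_mem h]
  ring

lemma SFn_of_notMem {α : ℝ} (h : α ∉ Icc 0.45 0.55) : SFn α = (3 * binH α - 2) / 4 := by
  have hβ := betaFn_of_notMem h
  have hγ : gammaFn α = α := by simp [gammaFn, hβ]
  have hl : lamFn α = 0 := by simp [lamFn, hβ, binH]
  rw [SFn, hβ, hγ, hl]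
  ring

lemma SFn_half : SFn (1 / 2) = (0.35 + 0.78 * binH (1 / 4)) / 4 := by
  have hmem : (1 / 2 : ℝ) ∈ Icc 0.45 0.55 := by norm_num
  have hγ : gammaFn (1 / 2) = 1 / 2 := by rw [gammaFn_of_mem hmem]; norm_num
  have hl : lamFn (1 / 2) = 0 := by rw [lamFn, betaFn_of_mem hmem]; norm_num; ring
  rw [SFn_of_mem hmem, hγ, hl, binH_half]
  ring

lemma SFn_half_le : SFn (1 / 2) ≤ 0.246 := by
  rw [SFn_half, binH_quarter]
  linarith [logb_two_three_mem.1]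

lemma lamFn_le_of_mem {α : ℝ} (h : α ∈ Icc 0.45 0.55) :
    lamFn α ≤ 0.3542 * (1 - 2 * α) ^ 2 / log 2 := by
  obtain ⟨h1, h2⟩ := h
  have hα0 : α ≠ 0 := by linarith
  have hα1 : 1 - α ≠ 0 := by linarith
  set a := 0.39 / (2 * α) with ha_def
  set b := 0.39 / (2 * (1 - α)) with hb_def
  have hlam :
      lamFn α = (binEntropy 0.39 - α * binEntropy a - (1 - α) * binEntropy b) / log 2 := by
    rw [lamFn, betaFn_of_mem ⟨h1, h2⟩, show (3 : ℝ) * 0.13 = 0.39 by norm_num]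
    simp only [binH_eq_binEntropy_div]
    ring
  have ha : a ∈ Icc 0.35 0.44 := by
    constructor
    · rw [le_div_iff₀ (by linarith)]; linarith
    · rw [div_le_iff₀ (by linarith)]; linarith
  have hb : b ∈ Icc 0.35 0.44 := by
    constructor
    · rw [le_div_iff₀ (by linarith)]; linarith
    · rw [div_le_iff₀ (by linarith)]; linarith
  have hmean : α * a + (1 - α) * b = 0.39 := by
    rw [ha_def, hb_def]
    field_simp
    ring
  have hvar : α * (1 - α) * (a - b) ^ 2 ≤ 0.154 * (1 - 2 * α) ^ 2 := by
    have : α * (1 - α) * (a - b) ^ 2 = 0.1521 * (1 - 2 * α) ^ 2 / (4 * (α * (1 - α))) := by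
      rw [ha_def, hb_def]
      field_simp
      ring
    rw [this, div_le_iff₀ (by nlinarith)]
    nlinarith [sq_nonneg (1 - 2 * α), mul_nonneg (sub_nonneg.2 h1) (sub_nonneg.2 h2)]
  have hconv : ConvexOn ℝ (Icc 0.35 0.44) fun y => binEntropy y + 4.6 / 2 * y ^ 2 :=
    convexOn_binEntropy_add_sq (convex_Icc _ _) (Icc_subset_Ioo (by norm_num) (by norm_num))
      fun y hy => by nlinarith [hy.1, hy.2]
  have hgap := jensen_gap_le_of_convexOn_add_sq hconv ha hb (t := α) (by linarith)
    (by linarith)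
  rw [hmean] at hgap
  rw [hlam]
  gcongr
  linarith

lemma gammaFn_mem_of_mem {α : ℝ} (h : α ∈ Icc 0.45 0.55) : gammaFn α ∈ Icc 0 1 := by
  rw [gammaFn_of_mem h]
  constructor
  · rw [le_div_iff₀ (by norm_num)]; linarith [h.1]
  · rw [div_le_iff₀ (by norm_num)]; linarith [h.2]

lemma SFn_le_SFn_half_of_mem {α : ℝ} (h : α ∈ Icc 0.45 0.55) : SFn α ≤ SFn (1 / 2) := by
  have hγ := binH_le_one_sub_sq (gammaFn_mem_of_mem h)
  have hl := lamFn_le_of_mem h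
  rw [gammaFn_of_mem h] at hγ
  have hsq : 4 * (0.3542 * (1 - 2 * α) ^ 2 / log 2)
      ≤ 1.83 * (2 * ((α - 0.195) / 0.61 - 1 / 2) ^ 2 / log 2) := by
    rw [← mul_div_assoc, ← mul_div_assoc]
    refine div_le_div_of_nonneg_right ?_ (log_pos one_lt_two).le
    linear_combination (3.66 / 0.3721 - 5.6672) * sq_nonneg (α - 1 / 2)
  rw [SFn_of_mem h, SFn_half, gammaFn_of_mem h]
  linarith

lemma SFn_le_SFn_half_of_notMem {α : ℝ} (h0 : 0 ≤ α) (h1 : α ≤ 1) (h : α ∉ Icc 0.45 0.55) :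
    SFn α ≤ SFn (1 / 2) := by
  have hα : binH α ≤ binH 0.45 := binH_le_of_notMem_Ioo (by norm_num) ⟨h0, h1⟩
    fun hI => h ⟨hI.1.le, by linarith [hI.2]⟩
  have h45 := binH_le_one_sub_sq (x := 0.45) (by norm_num)
  have hgap : 0.007 ≤ 2 * ((0.45 : ℝ) - 1 / 2) ^ 2 / log 2 := by
    rw [le_div_iff₀ (log_pos one_lt_two)]
    linarith [log_two_lt_d9]
  rw [SFn_of_notMem h, SFn_half, binH_quarter]
  linarith [logb_two_three_mem.2]

theorem space_exponent_bound :
    (∀ α : ℝ, 0 ≤ α → α ≤ 1 → SFn α ≤ SFn (1 / 2)) ∧ SFn (1 / 2) ≤ 0.246 := by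
  refine ⟨fun α h0 h1 => ?_, SFn_half_le⟩
  by_cases h : α ∈ Icc (0.45 : ℝ) 0.55
  · exact SFn_le_SFn_half_of_mem h
  · exact SFn_le_SFn_half_of_notMem h0 h1 h
end

section
/- For every real μ with 0 ≤ μ ≤ 1/2, setting x = 1/2 + log₂(3)·(μ − 1/4), the following inequality holds: (1 − μ)·h( (x − μ)/(1 − μ) ) − (1/2)·h(2x − 2μ) ≤ 1 − h(1/4). -/
/-!
Work in nats and replace `log₂ 3` by a slope `c`. By the grouping rule
`u h(t/u) = η t + η (u - t) - η u` (with `η = negMulLog`) and `η (2t) = 2 η t - 2t log 2`,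
the terms `η t` in `t = x - μ` cancel: the left-hand side becomes an affine function of `μ`
plus `η` of the three affine functions `1/2 + c/4 - cμ`, `1 - μ`, `c/2 - 2(c-1)μ`, all positive
for `μ ≤ 1/2` when `1 ≤ c < 2`. Clearing denominators in its second derivative leaves a
polynomial of constant sign, so it is concave. Its derivative at `μ = 1/4` is `c log 2 - log 3`,
so the slope `c = log₂ 3` is exactly the one that makes `μ = 1/4` (where `x = 1/2`) the
maximum, and the value there is `1 - h(1/4)`.
-/

open Real Set

lemma ConcaveOn.isMaxOn_of_hasDerivAt_eq_zero {S : Set ℝ} {f : ℝ → ℝ} {m : ℝ}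
    (hf : ConcaveOn ℝ S f) (hm : m ∈ S) (hf' : HasDerivAt f 0 m) : IsMaxOn f S m := by
  refine isMaxOn_iff.2 fun y hy => ?_
  rcases lt_trichotomy y m with hym | rfl | hmy
  · have := hf.le_slope_of_hasDerivAt hy hm hym hf'
    rw [slope_def_field, le_div_iff₀ (sub_pos.2 hym)] at this
    linarith
  · exact le_rfl
  · have := hf.slope_le_of_hasDerivAt hm hy hmy hf'
    rw [slope_def_field, div_le_iff₀ (sub_pos.2 hmy)] at this
    linarith

lemma binH_eq_binEntropy_div_log_two (p : ℝ) : binH p = binEntropy p / log 2 := by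
  simp only [binH, binEntropy, logb, log_inv]
  ring

lemma mul_binEntropy_div (t u : ℝ) :
    u * binEntropy (t / u) = negMulLog t + negMulLog (u - t) - negMulLog u := by
  rcases eq_or_ne u 0 with rfl | hu
  · simp [negMulLog, log_neg_eq_log]
  · have h1 : 1 - t / u = (u - t) * u⁻¹ := by field_simp
    rw [binEntropy_eq_negMulLog_add_negMulLog_one_sub, h1, div_eq_mul_inv, negMulLog_mul,
      negMulLog_mul]
    simp only [negMulLog, log_inv]
    field_simp
    ring

lemma negMulLog_two_mul (t : ℝ) : negMulLog (2 * t) = 2 * negMulLog t - 2 * t * log 2 := by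
  rw [mul_comm, negMulLog_mul]
  simp only [negMulLog]
  ring

lemma hasDerivAt_negMulLog_sub_mul {a b x : ℝ} (h : a - b * x ≠ 0) :
    HasDerivAt (fun y => negMulLog (a - b * y)) (b * (log (a - b * x) + 1)) x := by
  refine ((hasDerivAt_negMulLog h).comp x
    (((hasDerivAt_id' x).const_mul b).const_sub a)).congr_deriv ?_
  ring

lemma hasDerivAt_log_sub_mul {a b x : ℝ} (h : a - b * x ≠ 0) :
    HasDerivAt (fun y => log (a - b * y)) (-b / (a - b * x)) x := by
  refine ((((hasDerivAt_id' x).const_mul b).const_sub a).log h).congr_deriv ?_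
  ring

noncomputable def entropyGap (c μ : ℝ) : ℝ :=
  (1 - μ) * binEntropy ((1 / 2 + c * (μ - 1 / 4) - μ) / (1 - μ))
    - 1 / 2 * binEntropy (2 * (1 / 2 + c * (μ - 1 / 4)) - 2 * μ)

lemma entropyGap_eq_negMulLog (c : ℝ) : entropyGap c = fun μ =>
    (1 / 2 - c / 4 + (c - 1) * μ) * log 2 + negMulLog (1 / 2 + c / 4 - c * μ)
      - negMulLog (1 - μ) - negMulLog (c / 2 - 2 * (c - 1) * μ) / 2 := by
  funext μ
  rw [entropyGap, mul_binEntropy_div, binEntropy_eq_negMulLog_add_negMulLog_one_sub,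
    show 2 * (1 / 2 + c * (μ - 1 / 4)) - 2 * μ = 2 * (1 / 2 + c * (μ - 1 / 4) - μ) by ring,
    negMulLog_two_mul]
  ring_nf

noncomputable def entropyGapDeriv (c μ : ℝ) : ℝ :=
  (c - 1) * log 2 + c * log (1 / 2 + c / 4 - c * μ) - log (1 - μ)
    - (c - 1) * log (c / 2 - 2 * (c - 1) * μ)

lemma entropyGap_args_pos {c μ : ℝ} (hc1 : 1 ≤ c) (hc2 : c < 2) (hμ : μ ≤ 1 / 2) :
    0 < 1 / 2 + c / 4 - c * μ ∧ 0 < 1 - μ ∧ 0 < c / 2 - 2 * (c - 1) * μ := by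
  refine ⟨?_, by linarith, ?_⟩ <;> nlinarith

lemma hasDerivAt_entropyGap {c μ : ℝ} (hc1 : 1 ≤ c) (hc2 : c < 2) (hμ : μ ≤ 1 / 2) :
    HasDerivAt (entropyGap c) (entropyGapDeriv c μ) μ := by
  obtain ⟨hs, hu, hr⟩ := entropyGap_args_pos hc1 hc2 hμ
  have hlin :=
    (((hasDerivAt_id' μ).const_mul (c - 1)).const_add (1 / 2 - c / 4)).mul_const (log 2)
  have hu' := hasDerivAt_negMulLog_sub_mul (a := 1) (b := 1) (x := μ) (by linarith)
  simp only [one_mul] at hu'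
  rw [entropyGap_eq_negMulLog]
  refine (((hlin.add (hasDerivAt_negMulLog_sub_mul hs.ne')).sub hu').sub
    ((hasDerivAt_negMulLog_sub_mul hr.ne').div_const 2)).congr_deriv ?_
  rw [entropyGapDeriv]
  ring

lemma hasDerivAt_entropyGapDeriv {c μ : ℝ} (hc1 : 1 ≤ c) (hc2 : c < 2) (hμ : μ ≤ 1 / 2) :
    HasDerivAt (entropyGapDeriv c) (1 / (1 - μ) - c ^ 2 / (1 / 2 + c / 4 - c * μ)
      + 2 * (c - 1) ^ 2 / (c / 2 - 2 * (c - 1) * μ)) μ := by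
  obtain ⟨hs, hu, hr⟩ := entropyGap_args_pos hc1 hc2 hμ
  have hu' := hasDerivAt_log_sub_mul (a := 1) (b := 1) (x := μ) (by linarith)
  simp only [one_mul] at hu'
  refine ((((hasDerivAt_log_sub_mul hs.ne').const_mul c).const_add ((c - 1) * log 2)).sub hu'
    |>.sub ((hasDerivAt_log_sub_mul hr.ne').const_mul (c - 1))).congr_deriv ?_
  ring

lemma entropyGap_deriv2_nonpos {c μ : ℝ} (hc1 : 1 ≤ c) (hc2 : c < 2) (hμ : μ ≤ 1 / 2) :
    1 / (1 - μ) - c ^ 2 / (1 / 2 + c / 4 - c * μ) + 2 * (c - 1) ^ 2 / (c / 2 - 2 * (c - 1) * μ)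
      ≤ 0 := by
  obtain ⟨hs, hu, hr⟩ := entropyGap_args_pos hc1 hc2 hμ
  rw [div_sub_div _ _ hu.ne' hs.ne', div_add_div _ _ (by positivity) hr.ne', div_nonpos_iff]
  refine Or.inr ⟨?_, by positivity⟩
  nlinarith [mul_nonneg (sub_nonneg.2 hc1) (sub_nonneg.2 hc2.le), sub_nonneg.2 hμ,
    mul_nonneg (mul_nonneg (sub_nonneg.2 hc1) (sub_nonneg.2 hc2.le)) (sub_nonneg.2 hμ)]

lemma concaveOn_entropyGap {c : ℝ} (hc1 : 1 ≤ c) (hc2 : c < 2) :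
    ConcaveOn ℝ (Iic (1 / 2)) (entropyGap c) := by
  have hle {μ : ℝ} (hμ : μ ∈ interior (Iic (1 / 2))) : μ ≤ 1 / 2 :=
    mem_Iic.1 (interior_subset hμ)
  exact concaveOn_of_hasDerivWithinAt2_nonpos (convex_Iic _)
    (fun μ hμ => (hasDerivAt_entropyGap hc1 hc2 hμ).continuousAt.continuousWithinAt)
    (fun μ hμ => (hasDerivAt_entropyGap hc1 hc2 (hle hμ)).hasDerivWithinAt)
    (fun μ hμ => (hasDerivAt_entropyGapDeriv hc1 hc2 (hle hμ)).hasDerivWithinAt)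
    (fun μ hμ => entropyGap_deriv2_nonpos hc1 hc2 (hle hμ))

lemma entropyGapDeriv_quarter (c : ℝ) : entropyGapDeriv c (1 / 4) = c * log 2 - log 3 := by
  have h34 : log (3 / 4) = log 3 - 2 * log 2 := by
    rw [log_div (by norm_num) (by norm_num), show (4 : ℝ) = 2 ^ 2 by norm_num, log_pow]
    push_cast; ring
  rw [entropyGapDeriv, show 1 / 2 + c / 4 - c * (1 / 4) = 2⁻¹ by ring,
    show c / 2 - 2 * (c - 1) * (1 / 4) = 2⁻¹ by ring, show (1 : ℝ) - 1 / 4 = 3 / 4 by norm_num,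
    log_inv, h34]
  ring

lemma entropyGap_quarter (c : ℝ) : entropyGap c (1 / 4) = log 2 - binEntropy (1 / 4) := by
  have h2 : negMulLog (1 / 2) = log 2 / 2 := by
    simp only [negMulLog, one_div, log_inv]
    ring
  have h4 : negMulLog (1 / 4) = log 2 / 2 := by
    rw [show (1 / 4 : ℝ) = 1 / 2 * (1 / 2) by norm_num, negMulLog_mul, h2]
    ring
  simp only [entropyGap_eq_negMulLog, binEntropy_eq_negMulLog_add_negMulLog_one_sub]
  rw [show 1 / 2 + c / 4 - c * (1 / 4) = 1 / 2 by ring,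
    show c / 2 - 2 * (c - 1) * (1 / 4) = 1 / 2 by ring, h2, h4]
  ring

lemma one_le_logb_two_three : 1 ≤ logb 2 3 := by
  rw [← logb_self_eq_one one_lt_two]
  exact logb_le_logb_of_le one_lt_two two_pos (by norm_num)

lemma logb_two_three_lt_two : logb 2 3 < 2 := by
  rw [logb_lt_iff_lt_rpow one_lt_two three_pos]
  norm_num

theorem f1_bound_general (μ : ℝ) (hμ1 : μ ≤ 1 / 2) :
    (1 - μ) * binH (((1 / 2 + Real.logb 2 3 * (μ - 1 / 4)) - μ) / (1 - μ))
      - (1 / 2) * binH (2 * (1 / 2 + Real.logb 2 3 * (μ - 1 / 4)) - 2 * μ)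
      ≤ 1 - binH (1 / 4) := by
  have hc1 := one_le_logb_two_three
  have hc2 := logb_two_three_lt_two
  have hcrit : entropyGapDeriv (logb 2 3) (1 / 4) = 0 := by
    rw [entropyGapDeriv_quarter, ← log_div_log, div_mul_cancel₀ _ (log_pos one_lt_two).ne',
      sub_self]
  have hderiv : HasDerivAt (entropyGap (logb 2 3)) 0 (1 / 4) :=
    hcrit ▸ hasDerivAt_entropyGap hc1 hc2 (by norm_num)
  have hquarter : (1 / 4 : ℝ) ∈ Iic (1 / 2) := by norm_num
  have hmax : entropyGap (logb 2 3) μ ≤ log 2 - binEntropy (1 / 4) :=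
    entropyGap_quarter (logb 2 3) ▸
      (concaveOn_entropyGap hc1 hc2).isMaxOn_of_hasDerivAt_eq_zero hquarter hderiv hμ1
  have hlog2 := log_pos one_lt_two
  simp only [binH_eq_binEntropy_div_log_two]
  calc _ = entropyGap (logb 2 3) μ / log 2 := by rw [entropyGap]; ring
    _ ≤ (log 2 - binEntropy (1 / 4)) / log 2 := by gcongr
    _ = _ := by field_simp

theorem f1_bound (μ : ℝ) (hμ0 : 0 ≤ μ) (hμ1 : μ ≤ 1 / 2) :
    (1 - μ) * binH (((1 / 2 + Real.logb 2 3 * (μ - 1 / 4)) - μ) / (1 - μ))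
      - (1 / 2) * binH (2 * (1 / 2 + Real.logb 2 3 * (μ - 1 / 4)) - 2 * μ)
      ≤ 1 - binH (1 / 4) :=
  f1_bound_general μ hμ1
end
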